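/- arXiv:2006.01579 — 2 statements merged into one kernel-verified Lean document; each statement's English description precedes it below -/
import Mathlib

section
/- Let N ≥ 2 and let c ∈ ℂ be nonzero. With P the permutation operator on ℂ^N ⊗ ℂ^N, Q the orthogonal-type operator Q_{(a,b),(c,d)} = δ_{b,N+1−a} δ_{d,N+1−c}, and κ = N/2 − 1, define R(u,v) = I + c·P/(u−v) − c·Q/(u−v+cκ). Then for all u, v ∈ ℂ with u−v ≠ 0, u−v+cκ ≠ 0 and v−u+cκ ≠ 0, the unitarity condition holds: R(u,v)·R(v,u) = (1 − c²/(u−v)²)·I⊗I. -/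
/-- The `o_N`-invariant R-matrix `R(u,v) = I + c·P/(u−v) − c·Q/(u−v+cκ)` with
`κ = N/2 − 1`, where `P_{(a,b),(c,d)} = δ_{a,d} δ_{b,c}` and
`Q_{(a,b),(c,d)} = δ_{b,N+1−a} δ_{d,N+1−c}` (index involution `i ↦ N+1−i`, i.e.
`Fin.rev` on `Fin N`). -/
noncomputable def RmatOrth (N : ℕ) (c u v : ℂ) :
    Matrix (Fin N × Fin N) (Fin N × Fin N) ℂ :=
  Matrix.of fun p q =>
    (if p = q then 1 else 0)
      + (c / (u - v)) * (if p.1 = q.2 ∧ p.2 = q.1 then 1 else 0)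
      - (c / (u - v + c * ((N : ℂ) / 2 - 1))) *
          (if p.2 = p.1.rev ∧ q.2 = q.1.rev then 1 else 0)

/-!
`R(u,v) = 1 + a P + b Q` with `Q = w wᵀ` for `w = Σ_i e_i ⊗ e_{i'}`. Since `i ↦ i'` is
an involution, `P w = w` and `wᵀ P = wᵀ`, while `wᵀ w = N`; so `P² = 1`, `PQ = QP = Q` and
`Q² = N Q` (the relations of the Brauer algebra `B₂(N)`), and `R(u,v) R(v,u)` is again a
combination of `1, P, Q`. Its `P`-coefficient `c/(u-v) + c/(v-u)` vanishes because it is odd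
in `u - v`, and its `Q`-coefficient vanishes exactly because `N = 2κ + 2`.
-/

namespace Matrix

variable {n R : Type*} [DecidableEq n] [CommSemiring R]

variable (n R) in
def swapMatrix : Matrix (n × n) (n × n) R :=
  of fun p q => if p = q.swap then 1 else 0

def pairingVec (σ : n → n) : n × n → R :=
  fun p => if p.2 = σ p.1 then 1 else 0

def contractionMatrix (σ : n → n) : Matrix (n × n) (n × n) R :=
  vecMulVec (pairingVec σ) (pairingVec σ)

theorem pairingVec_comp_swap {σ : n → n} (hσ : Function.Involutive σ) :
    pairingVec (R := R) σ ∘ Prod.swap = pairingVec σ := by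
  ext ⟨a, b⟩
  simp only [pairingVec, Function.comp_apply, Prod.fst_swap, Prod.snd_swap, eq_comm (a := a),
    hσ.eq_iff]

variable [Fintype n]

theorem swapMatrix_mulVec (v : n × n → R) : swapMatrix n R *ᵥ v = v ∘ Prod.swap := by
  ext p
  simp [swapMatrix, mulVec, dotProduct, Prod.ext_iff, Fintype.sum_prod_type, ite_and, Prod.swap]

theorem vecMul_swapMatrix (v : n × n → R) : v ᵥ* swapMatrix n R = v ∘ Prod.swap := by
  ext p
  simp [swapMatrix, vecMul, dotProduct, Prod.ext_iff, Fintype.sum_prod_type, ite_and, Prod.swap]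

theorem swapMatrix_mul_swapMatrix : swapMatrix n R * swapMatrix n R = 1 := by
  ext p q
  simp [swapMatrix, mul_apply, one_apply, Prod.ext_iff, Fintype.sum_prod_type, ite_and]

theorem pairingVec_dotProduct_self (σ : n → n) :
    pairingVec (R := R) σ ⬝ᵥ pairingVec σ = Fintype.card n := by
  simp [pairingVec, dotProduct, Fintype.sum_prod_type]

theorem swapMatrix_mul_contractionMatrix {σ : n → n} (hσ : Function.Involutive σ) :
    swapMatrix n R * contractionMatrix σ = contractionMatrix σ := by
  rw [contractionMatrix, mul_vecMulVec, swapMatrix_mulVec, pairingVec_comp_swap hσ]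

theorem contractionMatrix_mul_swapMatrix {σ : n → n} (hσ : Function.Involutive σ) :
    contractionMatrix σ * swapMatrix n R = contractionMatrix σ := by
  rw [contractionMatrix, vecMulVec_mul, vecMul_swapMatrix, pairingVec_comp_swap hσ]

theorem contractionMatrix_mul_self (σ : n → n) :
    contractionMatrix (R := R) σ * contractionMatrix σ =
      (Fintype.card n : R) • contractionMatrix σ := by
  rw [contractionMatrix, vecMulVec_mul_vecMulVec, pairingVec_dotProduct_self, vecMulVec_smul]

end Matrix

open Matrix

theorem mul_of_brauer_relations {K A : Type*} [CommRing K] [Ring A] [Algebra K A]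
    {P Q : A} {m : K} (hPP : P * P = 1) (hPQ : P * Q = Q) (hQP : Q * P = Q)
    (hQQ : Q * Q = m • Q) (a b a' b' : K) :
    (1 + a • P + b • Q) * (1 + a' • P + b' • Q) =
      (1 + a * a') • (1 : A) + (a + a') • P +
        (b + b' + a * b' + b * a' + m * b * b') • Q := by
  simp only [add_mul, mul_add, smul_mul_smul, one_mul, mul_one, hPP, hPQ, hQP, hQQ, smul_smul]
  module

theorem RmatOrth_eq (N : ℕ) (c u v : ℂ) :
    RmatOrth N c u v = 1 + (c / (u - v)) • swapMatrix (Fin N) ℂ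
      + (-(c / (u - v + c * ((N : ℂ) / 2 - 1)))) • contractionMatrix Fin.rev := by
  ext p q
  simp [RmatOrth, swapMatrix, contractionMatrix, pairingVec, vecMulVec_apply, one_apply,
    Prod.ext_iff, sub_eq_add_neg]
  by_cases hp : p.2 = p.1.rev <;> simp [hp]

theorem RmatOrth_unitarity_general (N : ℕ) (c : ℂ)
    (u v : ℂ) (huv : u - v ≠ 0)
    (huv' : u - v + c * ((N : ℂ) / 2 - 1) ≠ 0)
    (hvu' : v - u + c * ((N : ℂ) / 2 - 1) ≠ 0) :
    RmatOrth N c u v * RmatOrth N c v u =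
      (1 - c ^ 2 / (u - v) ^ 2) • (1 : Matrix (Fin N × Fin N) (Fin N × Fin N) ℂ) := by
  rw [RmatOrth_eq, RmatOrth_eq, mul_of_brauer_relations swapMatrix_mul_swapMatrix
    (swapMatrix_mul_contractionMatrix Fin.rev_rev) (contractionMatrix_mul_swapMatrix Fin.rev_rev)
    (contractionMatrix_mul_self _), Fintype.card_fin]
  set κ := (N : ℂ) / 2 - 1
  have hκ : 2 * κ = N - 2 := by unfold κ; ring
  have hvu : v - u ≠ 0 := sub_ne_zero.mpr (sub_ne_zero.mp huv).symm
  have hP : c / (u - v) + c / (v - u) = 0 := by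
    rw [← neg_sub u v, div_neg, add_neg_cancel]
  have hQ : -(c / (u - v + c * κ)) + -(c / (v - u + c * κ))
      + c / (u - v) * -(c / (v - u + c * κ)) + -(c / (u - v + c * κ)) * (c / (v - u))
      + N * -(c / (u - v + c * κ)) * -(c / (v - u + c * κ)) = 0 := by
    field_simp
    linear_combination c ^ 2 * (u - v) ^ 2 * hκ
  have hOne : 1 + c / (u - v) * (c / (v - u)) = 1 - c ^ 2 / (u - v) ^ 2 := by
    rw [← neg_sub u v, div_neg, ← div_pow]; ring
  rw [hP, hQ, hOne, zero_smul, zero_smul, add_zero, add_zero]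

/-- The `o_N`-invariant R-matrix satisfies the unitarity condition
`R(u,v)·R(v,u) = (1 − c²/(u−v)²)·I⊗I`. -/
theorem RmatOrth_unitarity (N : ℕ) (hN : 2 ≤ N) (c : ℂ) (hc : c ≠ 0)
    (u v : ℂ) (huv : u - v ≠ 0)
    (huv' : u - v + c * ((N : ℂ) / 2 - 1) ≠ 0)
    (hvu' : v - u + c * ((N : ℂ) / 2 - 1) ≠ 0) :
    RmatOrth N c u v * RmatOrth N c v u =
      (1 - c ^ 2 / (u - v) ^ 2) • (1 : Matrix (Fin N × Fin N) (Fin N × Fin N) ℂ) :=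
  RmatOrth_unitarity_general N c u v huv huv' hvu'
end

section
/- Let n ≥ 1, N = 2n, and let c ∈ ℂ be nonzero. With P the permutation operator on ℂ^N ⊗ ℂ^N, ε_i = 1 for i ≤ n and ε_i = −1 for i > n, Q the symplectic-type operator Q_{(a,b),(c,d)} = ε_a ε_c δ_{b,2n+1−a} δ_{d,2n+1−c}, and κ = n+1, define R(u,v) = I + c·P/(u−v) − c·Q/(u−v+cκ). Then for all u, v ∈ ℂ with u−v ≠ 0, u−v+cκ ≠ 0 and v−u+cκ ≠ 0, the unitarity condition holds: R(u,v)·R(v,u) = (1 − c²/(u−v)²)·I⊗I. -/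
/-!
`P` is the permutation matrix of the flip `(a, b) ↦ (b, a)` and `Q = f fᵀ` is a rank-one
matrix built from `f(a, b) = ε_a δ_{b, a'}`, `a' = 2n+1−a`. Since `ε_{a'} = -ε_a`, `f` is
antisymmetric, so `P² = 1`, `PQ = QP = -Q` and `Q² = (f ⬝ f) Q = 2n Q`. In the algebra spanned by
`1, P, Q` these relations reduce unitarity to two scalar identities: the `P`-coefficients of
`R(u,v)` and `R(v,u)` cancel, and the `Q`-coefficient vanishes exactly because `2n = 2κ - 2`.
-/

/-- The sign function `ε_i = 1` for `i ≤ n` and `ε_i = −1` for `i > n`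
(`0`-based: `ε_i = 1` iff `i < n`). -/
noncomputable def epsSp (n : ℕ) (i : Fin (2 * n)) : ℂ :=
  if (i : ℕ) < n then 1 else -1

/-- The `sp_{2n}`-invariant R-matrix `R(u,v) = I + c·P/(u−v) − c·Q/(u−v+cκ)` with
`κ = n+1`, where `P_{(a,b),(c,d)} = δ_{a,d} δ_{b,c}` and
`Q_{(a,b),(c,d)} = ε_a ε_c δ_{b,2n+1−a} δ_{d,2n+1−c}` (index involution
`i ↦ 2n+1−i`, i.e. `Fin.rev` on `Fin (2n)`). -/
noncomputable def RmatSp (n : ℕ) (c u v : ℂ) :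
    Matrix (Fin (2 * n) × Fin (2 * n)) (Fin (2 * n) × Fin (2 * n)) ℂ :=
  Matrix.of fun p q =>
    (if p = q then 1 else 0)
      + (c / (u - v)) * (if p.1 = q.2 ∧ p.2 = q.1 then 1 else 0)
      - (c / (u - v + c * ((n : ℂ) + 1))) *
          (epsSp n p.1 * epsSp n q.1 * (if p.2 = p.1.rev ∧ q.2 = q.1.rev then 1 else 0))

open Matrix

section Relations

variable {ι K : Type*} [Fintype ι] [DecidableEq ι] [Field K]

theorem one_add_smul_sub_smul_mul_eq_smul_one {P Q : Matrix ι ι K} {κ : K}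
    (hP : P * P = 1) (hPQ : P * Q = -Q) (hQP : Q * P = -Q) (hQ : Q * Q = (2 * κ - 2) • Q)
    {c x : K} (hx : x ≠ 0) (hxκ : x + c * κ ≠ 0) (hxκ' : -x + c * κ ≠ 0) :
    (1 + (c / x) • P - (c / (x + c * κ)) • Q) * (1 + (c / -x) • P - (c / (-x + c * κ)) • Q) =
      (1 - c ^ 2 / x ^ 2) • (1 : Matrix ι ι K) := by
  set a := c / x
  set a' := c / -x
  set b := c / (x + c * κ)
  set b' := c / (-x + c * κ)
  have hexpand : (1 + a • P - b • Q) * (1 + a' • P - b' • Q) =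
      (1 + a * a') • 1 + (a + a') • P
        + (a * b' + a' * b - b - b' + (2 * κ - 2) * (b * b')) • Q := by
    simp only [sub_mul, mul_sub, add_mul, mul_add, one_mul, mul_one, smul_mul_assoc,
      mul_smul_comm, hP, hPQ, hQP, hQ]
    module
  have h1 : 1 + a * a' = 1 - c ^ 2 / x ^ 2 := by
    simp only [a, a']
    field_simp
    ring
  have hP0 : a + a' = 0 := by
    simp only [a, a']
    field_simp
    ring
  have hQ0 : a * b' + a' * b - b - b' + (2 * κ - 2) * (b * b') = 0 := by
    simp only [a, a', b, b']
    field_simp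
    ring
  rw [hexpand, h1, hP0, hQ0, zero_smul, zero_smul, add_zero, add_zero]

end Relations

section Flip

variable (ι R : Type*) [Fintype ι] [DecidableEq ι] [CommRing R]

abbrev flipMatrix : Matrix (ι × ι) (ι × ι) R :=
  (Equiv.prodComm ι ι).toPEquiv.toMatrix

theorem flipMatrix_mul_self : flipMatrix ι R * flipMatrix ι R = 1 := by
  rw [← PEquiv.toMatrix_trans, ← Equiv.toPEquiv_trans,
    show (Equiv.prodComm ι ι).trans (Equiv.prodComm ι ι) = Equiv.refl _ from rfl,
    Equiv.toPEquiv_refl, PEquiv.toMatrix_refl]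

variable {ι R} {κ : Type*} {f : ι × ι → R}

theorem flipMatrix_mul_vecMulVec (hf : ∀ p, f p.swap = -f p) (g : κ → R) :
    flipMatrix ι R * vecMulVec f g = -vecMulVec f g := by
  rw [mul_vecMulVec, PEquiv.toMatrix_toPEquiv_mulVec, ← neg_vecMulVec]
  exact congrArg (vecMulVec · g) (funext hf)

theorem vecMulVec_mul_flipMatrix (hf : ∀ p, f p.swap = -f p) (g : κ → R) :
    vecMulVec g f * flipMatrix ι R = -vecMulVec g f := by
  rw [vecMulVec_mul, PEquiv.vecMul_toMatrix_toPEquiv, ← vecMulVec_neg]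
  exact congrArg (vecMulVec g) (funext hf)

end Flip

section Symplectic

variable (n : ℕ)

theorem epsSp_mul_self (i : Fin (2 * n)) : epsSp n i * epsSp n i = 1 := by
  unfold epsSp
  split <;> norm_num

theorem epsSp_rev (i : Fin (2 * n)) : epsSp n i.rev = -epsSp n i := by
  have hi := i.isLt
  unfold epsSp
  rw [Fin.val_rev]
  split_ifs <;> first | omega | norm_num

noncomputable def sympVec (p : Fin (2 * n) × Fin (2 * n)) : ℂ :=
  epsSp n p.1 * if p.2 = p.1.rev then 1 else 0

theorem sympVec_swap (p : Fin (2 * n) × Fin (2 * n)) : sympVec n p.swap = -sympVec n p := by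
  obtain ⟨a, b⟩ := p
  by_cases h : b = a.rev
  · subst h
    simp [sympVec, epsSp_rev]
  · have h' : a ≠ b.rev := fun h' => h (by rw [h', Fin.rev_rev])
    simp [sympVec, h, h']

theorem sympVec_dotProduct_self : sympVec n ⬝ᵥ sympVec n = 2 * n := by
  have hrow (a : Fin (2 * n)) : ∑ b, sympVec n (a, b) * sympVec n (a, b) = 1 := by
    rw [Finset.sum_eq_single a.rev (fun b _ hb => by simp [sympVec, hb]) (by simp)]
    simp [sympVec, epsSp_mul_self]
  simp [dotProduct, Fintype.sum_prod_type, hrow]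

theorem RmatSp_eq (c u v : ℂ) :
    RmatSp n c u v = 1 + (c / (u - v)) • flipMatrix _ ℂ
      - (c / (u - v + c * ((n : ℂ) + 1))) • vecMulVec (sympVec n) (sympVec n) := by
  ext ⟨a, b⟩ ⟨a', b'⟩
  simp only [RmatSp, sympVec, of_apply, Matrix.add_apply, Matrix.sub_apply, Matrix.smul_apply,
    one_apply, vecMulVec_apply, PEquiv.toMatrix_apply, Equiv.toPEquiv_apply, Option.mem_def,
    Option.some.injEq, Equiv.prodComm_apply, Prod.swap_prod_mk, Prod.mk.injEq, smul_eq_mul, ite_and]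
  split_ifs <;> ring

end Symplectic

theorem RmatSp_unitarity_general (n : ℕ) (c : ℂ)
    (u v : ℂ) (huv : u - v ≠ 0)
    (huv' : u - v + c * ((n : ℂ) + 1) ≠ 0)
    (hvu' : v - u + c * ((n : ℂ) + 1) ≠ 0) :
    RmatSp n c u v * RmatSp n c v u =
      (1 - c ^ 2 / (u - v) ^ 2) •
        (1 : Matrix (Fin (2 * n) × Fin (2 * n)) (Fin (2 * n) × Fin (2 * n)) ℂ) := by
  have hQ : vecMulVec (sympVec n) (sympVec n) * vecMulVec (sympVec n) (sympVec n) =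
      (2 * ((n : ℂ) + 1) - 2) • vecMulVec (sympVec n) (sympVec n) := by
    rw [vecMulVec_mul_vecMulVec, sympVec_dotProduct_self, vecMulVec_smul]
    ring_nf
  rw [RmatSp_eq, RmatSp_eq, show v - u = -(u - v) by ring]
  exact one_add_smul_sub_smul_mul_eq_smul_one (flipMatrix_mul_self _ _)
    (flipMatrix_mul_vecMulVec (sympVec_swap n) _) (vecMulVec_mul_flipMatrix (sympVec_swap n) _)
    hQ huv huv' (by rwa [neg_sub])

/-- The `sp_{2n}`-invariant R-matrix satisfies the unitarity condition
`R(u,v)·R(v,u) = (1 − c²/(u−v)²)·I⊗I`. -/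
theorem RmatSp_unitarity (n : ℕ) (hn : 1 ≤ n) (c : ℂ) (hc : c ≠ 0)
    (u v : ℂ) (huv : u - v ≠ 0)
    (huv' : u - v + c * ((n : ℂ) + 1) ≠ 0)
    (hvu' : v - u + c * ((n : ℂ) + 1) ≠ 0) :
    RmatSp n c u v * RmatSp n c v u =
      (1 - c ^ 2 / (u - v) ^ 2) •
        (1 : Matrix (Fin (2 * n) × Fin (2 * n)) (Fin (2 * n) × Fin (2 * n)) ℂ) :=
  RmatSp_unitarity_general n c u v huv huv' hvu'
end
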